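/- arXiv:math/0607247 — 2 statements merged into one kernel-verified Lean document; each statement's English description precedes it below -/
import Mathlib

section
/- Let p = 5 or p = 7 and let k ≥ 4 be an even integer. For every θ with 0 < θ < π, the complex number F*_{k,p,2}(θ) := e^{ikθ/2} · E*_{k,p}(e^{iθ}/(2√p) − 1/2) is real, i.e. its imaginary part is zero. -/
open Complex

/-- The weight-`k` Eisenstein series for `SL₂(ℤ)`:
`E_k(z) = (1/2) ∑_{(c,d) coprime} (cz+d)^{-k}`. -/
noncomputable def Ek (k : ℕ) (z : ℂ) : ℂ :=
  (1 / 2) * ∑' q : {q : ℤ × ℤ // Int.gcd q.1 q.2 = 1},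
    (((q : ℤ × ℤ).1 : ℂ) * z + ((q : ℤ × ℤ).2 : ℂ)) ^ (-(k : ℤ))

/-- The Eisenstein series associated with the Fricke group `Γ₀*(p)`:
`E*_{k,p}(z) = (p^{k/2} E_k(pz) + E_k(z)) / (p^{k/2} + 1)`. -/
noncomputable def EkStar (k p : ℕ) (z : ℂ) : ℂ :=
  ((p : ℂ) ^ (k / 2) * Ek k ((p : ℂ) * z) + Ek k z) / ((p : ℂ) ^ (k / 2) + 1)

/-!
The points `z = e^{iθ}/(2√p) - 1/2` form the arc `|2z + 1| = 1/√p`. For odd `p = 2m + 1`,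
complex conjugation on this arc is realised by two integer matrices of determinant `-1`:
`p z̄ = (-p z - m) / (2z + 1)` and `z̄ = (-(pz) - m) / (2(pz) + p)`. As a sum over all coprime
pairs, `E_k` transforms under all of `GL₂(ℤ)` by reindexing, and it commutes with conjugation.
Together these give `E*_{k,p}(z̄) = (√p (2z + 1))^k E*_{k,p}(z) = e^{ikθ} E*_{k,p}(z)`, so
multiplying by `e^{ikθ/2}` gives a number equal to its own conjugate.
-/

open ComplexConjugate

lemma IsCoprime.mul_add_mul_of_isUnit_det {R : Type*} [CommRing R] {m n : R} (a b c d : R)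
    (hmn : IsCoprime m n) (hdet : IsUnit (a * d - b * c)) :
    IsCoprime (m * a + n * c) (m * b + n * d) := by
  obtain ⟨s, t, hst⟩ := hmn
  obtain ⟨v, hv⟩ := hdet.exists_right_inv
  exact ⟨v * (s * d - t * b), v * (t * a - s * c), by linear_combination (s * m + t * n) * hv + hst⟩

def coprimePairEquiv (a b c d : ℤ) (hdet : IsUnit (a * d - b * c)) :
    {q : ℤ × ℤ // Int.gcd q.1 q.2 = 1} ≃ {q : ℤ × ℤ // Int.gcd q.1 q.2 = 1} :=
  have hδ := Int.isUnit_mul_self hdet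
  -- the inverse matrix is `δ (d -b; -c a)`, since `δ⁻¹ = δ` for `δ = ad - bc ∈ ℤˣ`
  let δ := a * d - b * c
  { toFun q := ⟨(q.1.1 * a + q.1.2 * c, q.1.1 * b + q.1.2 * d), Int.isCoprime_iff_gcd_eq_one.mp <|
      (Int.isCoprime_iff_gcd_eq_one.mpr q.2).mul_add_mul_of_isUnit_det a b c d hdet⟩
    invFun q := ⟨(q.1.1 * (δ * d) + q.1.2 * (-(δ * c)), q.1.1 * (-(δ * b)) + q.1.2 * (δ * a)),
      Int.isCoprime_iff_gcd_eq_one.mp <|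
        (Int.isCoprime_iff_gcd_eq_one.mpr q.2).mul_add_mul_of_isUnit_det _ _ _ _
          (by rwa [show δ * d * (δ * a) - -(δ * b) * -(δ * c) = δ by linear_combination δ * hδ])⟩
    left_inv q := by
      ext
      · linear_combination q.1.1 * hδ
      · linear_combination q.1.2 * hδ
    right_inv q := by
      ext
      · linear_combination q.1.1 * hδ
      · linear_combination q.1.2 * hδ }

lemma Ek_moebius (k : ℕ) {a b c d : ℤ} (hdet : IsUnit (a * d - b * c)) {z : ℂ}
    (hz : (c : ℂ) * z + d ≠ 0) :
    Ek k ((a * z + b) / (c * z + d)) = (c * z + d) ^ k * Ek k z := by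
  have hsummand : ∀ q : {q : ℤ × ℤ // Int.gcd q.1 q.2 = 1},
      (((q : ℤ × ℤ).1 : ℂ) * ((a * z + b) / (c * z + d)) + (q : ℤ × ℤ).2) ^ (-(k : ℤ)) =
        (c * z + d) ^ k * (((coprimePairEquiv a b c d hdet q : ℤ × ℤ).1 : ℂ) * z +
          (coprimePairEquiv a b c d hdet q : ℤ × ℤ).2) ^ (-(k : ℤ)) := by
    rintro ⟨⟨m, n⟩, -⟩
    have hfrac : (m : ℂ) * ((a * z + b) / (c * z + d)) + n =
        ((m * a + n * c) * z + (m * b + n * d)) / (c * z + d) := by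
      rw [eq_div_iff hz, add_mul, mul_assoc, div_mul_cancel₀ _ hz]
      ring
    simp only [coprimePairEquiv, Equiv.coe_fn_mk, Int.cast_add, Int.cast_mul]
    rw [hfrac, div_zpow, zpow_neg, zpow_neg, div_eq_mul_inv, inv_inv, mul_comm, zpow_natCast]
  unfold Ek
  rw [tsum_congr hsummand, tsum_mul_left, (coprimePairEquiv a b c d hdet).tsum_eq
    (fun q => (((q : ℤ × ℤ).1 : ℂ) * z + (q : ℤ × ℤ).2) ^ (-(k : ℤ)))]
  ring

lemma Ek_conj (k : ℕ) (z : ℂ) : Ek k (conj z) = conj (Ek k z) := by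
  unfold Ek
  rw [map_mul, Complex.conj_tsum]
  congr 1
  · rw [map_div₀, map_one, map_ofNat]
  · refine tsum_congr fun q => ?_
    simp only [map_zpow₀, map_add, map_mul, map_intCast]

lemma EkStar_conj (k p : ℕ) (z : ℂ) : EkStar k p (conj z) = conj (EkStar k p z) := by
  simp only [EkStar, map_div₀, map_add, map_mul, map_pow, map_natCast, map_one, ← Ek_conj]

lemma EkStar_conj_of_mul_conj_eq_one {k p : ℕ} (hk : Even k) (hp : Odd p) {z : ℂ}
    (harc : p * (2 * z + 1) * (2 * conj z + 1) = 1) :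
    EkStar k p (conj z) = p ^ (k / 2) * (2 * z + 1) ^ k * EkStar k p z := by
  obtain ⟨m, hm⟩ := hp
  have hpm : (p : ℂ) = 2 * m + 1 := by rw [hm]; push_cast; ring
  have hz : 2 * z + 1 ≠ 0 := by
    rintro h
    rw [h, mul_zero, zero_mul] at harc
    exact zero_ne_one harc
  have hpz : 2 * (p * z) + p ≠ 0 := by
    rw [show 2 * (p * z) + p = p * (2 * z + 1) by ring]
    exact mul_ne_zero (by rw [hpm]; exact_mod_cast (2 * m).succ_ne_zero) hz
  have hdet₁ : IsUnit (-(p : ℤ) * 1 - -(m : ℤ) * 2) := by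
    rw [show -(p : ℤ) * 1 - -(m : ℤ) * 2 = -1 by omega]
    exact isUnit_one.neg
  have hdet₂ : IsUnit (-1 * (p : ℤ) - -(m : ℤ) * 2) := by
    rw [show -1 * (p : ℤ) - -(m : ℤ) * 2 = -1 by omega]
    exact isUnit_one.neg
  have hEpz : Ek k (p * conj z) = (2 * z + 1) ^ k * Ek k z := by
    have h := Ek_moebius k hdet₁ (z := z) (by push_cast; exact hz)
    push_cast at h
    rw [← h]
    congr 1
    rw [eq_div_iff hz]
    linear_combination (1 / 2) * harc - (1 / 2) * hpm
  have hEz : Ek k (conj z) = (2 * (p * z) + p) ^ k * Ek k (p * z) := by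
    have h := Ek_moebius k hdet₂ (z := p * z) (by push_cast; exact hpz)
    push_cast at h
    rw [← h]
    congr 1
    rw [eq_div_iff hpz]
    linear_combination (1 / 2) * harc - (1 / 2) * hpm
  have hpk : (p : ℂ) ^ k = ((p : ℂ) ^ (k / 2)) ^ 2 := by
    rw [← pow_mul, mul_comm, Nat.two_mul_div_two_of_even hk]
  rw [EkStar, EkStar, hEpz, hEz, show 2 * (p * z) + p = p * (2 * z + 1) by ring, mul_pow, hpk]
  ring

lemma exp_conj_eq_inv_of_conj_eq_neg {x : ℂ} (hx : conj x = -x) : conj (exp x) = (exp x)⁻¹ := by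
  rw [← Complex.exp_conj, hx, Complex.exp_neg]

lemma sq_ofReal_sqrt_natCast (p : ℕ) : (Real.sqrt p : ℂ) ^ 2 = p := by
  rw [← Complex.ofReal_pow, Real.sq_sqrt (Nat.cast_nonneg p), Complex.ofReal_natCast]

lemma natCast_mul_mul_conj_eq_one_of_sqrt_mul_eq_exp {p : ℕ} {z : ℂ} {θ : ℝ}
    (hw : (Real.sqrt p : ℂ) * (2 * z + 1) = Complex.exp (I * θ)) :
    p * (2 * z + 1) * (2 * conj z + 1) = 1 := calc
  _ = ((Real.sqrt p : ℂ) * (2 * z + 1)) * conj ((Real.sqrt p : ℂ) * (2 * z + 1)) := by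
    simp only [map_mul, map_add, map_ofNat, map_one, Complex.conj_ofReal, ← sq_ofReal_sqrt_natCast]
    ring
  _ = 1 := by
    rw [hw, exp_conj_eq_inv_of_conj_eq_neg (by simp), mul_inv_cancel₀ (Complex.exp_ne_zero _)]

lemma im_mul_eq_zero_of_conj_eq {w E : ℂ} (hw : conj w = w⁻¹) (hE : conj E = w ^ 2 * E) :
    (w * E).im = 0 := by
  rw [← Complex.conj_eq_iff_im, map_mul, hw, hE]
  rcases eq_or_ne w 0 with rfl | hw0
  · simp
  · field_simp

theorem stmt1_general (p : ℕ) (hp : p = 5 ∨ p = 7) (k : ℕ) (hke : Even k)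
    (θ : ℝ) :
    (Complex.exp (I * k * θ / 2) *
      EkStar k p (Complex.exp (I * θ) / (2 * (Real.sqrt p : ℂ)) - 1/2)).im = 0 := by
  have hs0 : (Real.sqrt p : ℂ) ≠ 0 := by
    rw [Complex.ofReal_ne_zero, Real.sqrt_ne_zero']
    rcases hp with rfl | rfl <;> norm_num
  set z := Complex.exp (I * θ) / (2 * (Real.sqrt p : ℂ)) - 1 / 2
  have hw : (Real.sqrt p : ℂ) * (2 * z + 1) = Complex.exp (I * θ) := by
    simp only [z]
    field_simp
    ring
  have hphase : (p : ℂ) ^ (k / 2) * (2 * z + 1) ^ k = Complex.exp (I * k * θ / 2) ^ 2 := by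
    rw [← sq_ofReal_sqrt_natCast, ← pow_mul, Nat.two_mul_div_two_of_even hke, ← mul_pow, hw,
      ← Complex.exp_nat_mul, ← Complex.exp_nat_mul]
    ring_nf
  refine im_mul_eq_zero_of_conj_eq (exp_conj_eq_inv_of_conj_eq_neg ?_) ?_
  · simp only [map_div₀, map_mul, Complex.conj_I, map_natCast, Complex.conj_ofReal, map_ofNat]
    ring
  · have hodd : Odd p := by rcases hp with rfl | rfl <;> decide
    rw [← EkStar_conj, EkStar_conj_of_mul_conj_eq_one hke hodd
      (natCast_mul_mul_conj_eq_one_of_sqrt_mul_eq_exp hw), hphase]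

theorem stmt1 (p : ℕ) (hp : p = 5 ∨ p = 7) (k : ℕ) (hk : 4 ≤ k) (hke : Even k)
    (θ : ℝ) (hθ1 : 0 < θ) (hθ2 : θ < Real.pi) :
    (Complex.exp (I * k * θ / 2) *
      EkStar k p (Complex.exp (I * θ) / (2 * (Real.sqrt p : ℂ)) - 1/2)).im = 0 :=
  stmt1_general p hp k hke θ
end

section
/- Let k ≥ 4 be an integer with 4 ∣ k. Then E*_{k,5}(i/√5) = (2·5^{k/2}/(5^{k/2}+1))·E_k(√5·i), E*_{k,5}(−1/2 + i/(2√5)) = (2·5^{k/2}/(5^{k/2}+1))·E_k(−1/2 + (√5/2)·i), and E*_{k,5}(−2/5 + i/5) = ((5^{k/2} + (2+i)^k)/(5^{k/2}+1))·E_k(i). -/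
open Complex

/-!
Each of the three points is carried by an element of `SL₂(ℤ)` to a point `w` with `E_k(w)` on
the right-hand side, and five times the point is a translate of `w`. Since `E_k` is a sum over
coprime pairs `(c, d)`, and `(c, d) ↦ (c, d) γ` permutes them for `γ ∈ SL₂(ℤ)`, reindexing the
sum gives `E_k(γ z) = (cz + d)^k E_k(z)`; this needs no convergence, as `tsum` is invariant
under reindexing even where it takes its junk value. The automorphy factors are `√5 i`,
`2w + 1 = √5 i` and `2 + i`, and `(√5 i)^k = 5^{k/2}` because `4 ∣ k`.
-/

abbrev CoprimePair : Type := {q : ℤ × ℤ // Int.gcd q.1 q.2 = 1}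

lemma Int.gcd_mul_add_mul_eq_one {a b c d x y : ℤ} (h : a * d - b * c = 1)
    (hxy : Int.gcd x y = 1) : Int.gcd (x * a + y * c) (x * b + y * d) = 1 := by
  rw [← Int.isCoprime_iff_gcd_eq_one] at hxy ⊢
  obtain ⟨u, v, huv⟩ := hxy
  exact ⟨u * d - v * b, v * a - u * c, by linear_combination (a * d - b * c) * huv + h⟩

/-- Right multiplication of a row vector by the matrix `[[a, b], [c, d]]` of determinant one. -/
def CoprimePair.mulRightEquiv {a b c d : ℤ} (h : a * d - b * c = 1) :
    CoprimePair ≃ CoprimePair where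
  toFun q := ⟨(q.1.1 * a + q.1.2 * c, q.1.1 * b + q.1.2 * d), Int.gcd_mul_add_mul_eq_one h q.2⟩
  invFun q := ⟨(q.1.1 * d - q.1.2 * c, q.1.2 * a - q.1.1 * b),
    by simpa [sub_eq_add_neg, add_comm] using
      Int.gcd_mul_add_mul_eq_one (a := d) (b := -b) (c := -c) (d := a)
        (by linear_combination h) q.2⟩
  left_inv q := Subtype.ext <| Prod.ext (by linear_combination q.1.1 * h)
    (by linear_combination q.1.2 * h)
  right_inv q := Subtype.ext <| Prod.ext (by linear_combination q.1.1 * h)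
    (by linear_combination q.1.2 * h)

lemma Ek_eq_pow_mul_Ek {k : ℕ} {a b c d : ℤ} (h : a * d - b * c = 1) {z w : ℂ}
    (hz : (c : ℂ) * z + d ≠ 0) (hw : ((c : ℂ) * z + d) * w = a * z + b) :
    Ek k w = ((c : ℂ) * z + d) ^ k * Ek k z := by
  have hterm : ∀ q : CoprimePair,
      (((CoprimePair.mulRightEquiv h q).1.1 : ℂ) * z + (CoprimePair.mulRightEquiv h q).1.2)
          ^ (-(k : ℤ))
        = (((c : ℂ) * z + d) ^ k)⁻¹ * ((q.1.1 : ℂ) * w + q.1.2) ^ (-(k : ℤ)) := by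
    intro q
    have hfactor : ((CoprimePair.mulRightEquiv h q).1.1 : ℂ) * z
          + (CoprimePair.mulRightEquiv h q).1.2
        = ((c : ℂ) * z + d) * ((q.1.1 : ℂ) * w + q.1.2) := by
      simp only [CoprimePair.mulRightEquiv, Equiv.coe_fn_mk]
      push_cast
      linear_combination (-(q.1.1 : ℂ)) * hw
    rw [hfactor, mul_zpow, zpow_neg, zpow_natCast]
  unfold Ek
  rw [← (CoprimePair.mulRightEquiv h).tsum_eq fun q : CoprimePair =>
    ((q.1.1 : ℂ) * z + q.1.2) ^ (-(k : ℤ)), tsum_congr hterm, tsum_mul_left]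
  rw [mul_left_comm (1 / 2 : ℂ), mul_inv_cancel_left₀ (pow_ne_zero k hz)]

lemma Ek_add_intCast (k : ℕ) (z : ℂ) (n : ℤ) : Ek k (z + n) = Ek k z := by
  simpa using Ek_eq_pow_mul_Ek (k := k) (a := 1) (b := n) (c := 0) (d := 1) (by ring)
    (z := z) (by simp) (by simp)

lemma Ek_neg_inv (k : ℕ) {z : ℂ} (hz : z ≠ 0) : Ek k (-z⁻¹) = z ^ k * Ek k z := by
  simpa using Ek_eq_pow_mul_Ek (k := k) (a := 0) (b := -1) (c := 1) (d := 0) (by ring)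
    (z := z) (by simpa using hz) (by simp [hz])

lemma ofReal_sqrt_mul_I_pow_of_four_dvd {r : ℝ} (hr : 0 ≤ r) {k : ℕ} (hk : 4 ∣ k) :
    ((Real.sqrt r : ℂ) * I) ^ k = (r : ℂ) ^ (k / 2) := by
  obtain ⟨m, rfl⟩ := hk
  have hsq : (Real.sqrt r : ℂ) ^ 2 = r := by exact_mod_cast Real.sq_sqrt hr
  rw [show 4 * m / 2 = 2 * m by omega, ← hsq, ← pow_mul, mul_pow, pow_mul I, I_pow_four,
    one_pow, mul_one, show 2 * (2 * m) = 4 * m by ring]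

lemma EkStar_eq_mul_Ek {k p : ℕ} {z w A B : ℂ} (hpz : Ek k (p * z) = A * Ek k w)
    (hz : Ek k z = B * Ek k w) :
    EkStar k p z = ((p : ℂ) ^ (k / 2) * A + B) / ((p : ℂ) ^ (k / 2) + 1) * Ek k w := by
  rw [EkStar, hpz, hz]
  ring

theorem stmt5_general (k : ℕ) (hk4 : 4 ∣ k) :
    EkStar k 5 (I / Real.sqrt 5) =
      (2 * (5 : ℂ) ^ (k / 2) / ((5 : ℂ) ^ (k / 2) + 1)) * Ek k ((Real.sqrt 5 : ℂ) * I) ∧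
    EkStar k 5 (-1/2 + I / (2 * Real.sqrt 5)) =
      (2 * (5 : ℂ) ^ (k / 2) / ((5 : ℂ) ^ (k / 2) + 1)) *
        Ek k (-1/2 + ((Real.sqrt 5 : ℂ) / 2) * I) ∧
    EkStar k 5 (-2/5 + I / 5) =
      (((5 : ℂ) ^ (k / 2) + (2 + I) ^ k) / ((5 : ℂ) ^ (k / 2) + 1)) * Ek k I := by
  have hs : (Real.sqrt 5 : ℂ) ^ 2 = 5 := by
    exact_mod_cast Real.sq_sqrt (show (0 : ℝ) ≤ 5 by norm_num)
  set s : ℂ := (Real.sqrt 5 : ℂ)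
  have hs0 : s ≠ 0 := by rintro h; norm_num [h] at hs
  have hsI0 : s * I ≠ 0 := mul_ne_zero hs0 I_ne_zero
  have hsI : (s * I) ^ k = 5 ^ (k / 2) := by
    exact_mod_cast ofReal_sqrt_mul_I_pow_of_four_dvd (by norm_num : (0 : ℝ) ≤ 5) hk4
  refine ⟨?_, ?_, ?_⟩
  · refine (EkStar_eq_mul_Ek (A := 1) (B := 5 ^ (k / 2)) ?_ ?_).trans (by push_cast; ring)
    · rw [one_mul]; congr 1; field_simp; linear_combination -hs
    · rw [← hsI, ← Ek_neg_inv k hsI0]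
      congr 1; field_simp; linear_combination I_sq
  · refine (EkStar_eq_mul_Ek (A := 1) (B := 5 ^ (k / 2)) ?_ ?_).trans (by push_cast; ring)
    · rw [one_mul, ← Ek_add_intCast k (-1/2 + s / 2 * I) (-2)]
      congr 1; push_cast; field_simp; linear_combination -I * hs
    · have h21 : (2 : ℂ) * (-1/2 + s / 2 * I) + 1 = s * I := by ring
      have := Ek_eq_pow_mul_Ek (k := k) (a := -1) (b := -1) (c := 2) (d := 1) (by ring)
        (z := -1/2 + s / 2 * I) (w := -1/2 + I / (2 * s))
        (by push_cast; rwa [h21])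
        (by push_cast; field_simp; linear_combination s * I_sq)
      push_cast at this
      rwa [h21, hsI] at this
  · refine (EkStar_eq_mul_Ek (A := 1) (B := (2 + I) ^ k) ?_ ?_).trans (by push_cast; ring)
    · rw [one_mul, ← Ek_add_intCast k I (-2)]; congr 1; push_cast; ring
    · have h2I : (2 : ℂ) + I ≠ 0 := fun h => by simpa using congrArg Complex.im h
      rw [← Ek_add_intCast k I 2, Int.cast_two, add_comm I, ← Ek_neg_inv k h2I]
      congr 1; field_simp; linear_combination I_sq

theorem stmt5 (k : ℕ) (hk : 4 ≤ k) (hk4 : 4 ∣ k) :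
    EkStar k 5 (I / Real.sqrt 5) =
      (2 * (5 : ℂ) ^ (k / 2) / ((5 : ℂ) ^ (k / 2) + 1)) * Ek k ((Real.sqrt 5 : ℂ) * I) ∧
    EkStar k 5 (-1/2 + I / (2 * Real.sqrt 5)) =
      (2 * (5 : ℂ) ^ (k / 2) / ((5 : ℂ) ^ (k / 2) + 1)) *
        Ek k (-1/2 + ((Real.sqrt 5 : ℂ) / 2) * I) ∧
    EkStar k 5 (-2/5 + I / 5) =
      (((5 : ℂ) ^ (k / 2) + (2 + I) ^ k) / ((5 : ℂ) ^ (k / 2) + 1)) * Ek k I :=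
  stmt5_general k hk4
end
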